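/- Let n ≥ 4, 1 < p < q < n, and a ∈ (1/2, a*(n,p)]. Then b*(n,1,a,q) ≥ b*(n,p,a,q), where b*(n,p,a,q) = (1/2)·√( [(n−q+1)((p+1)(q−p+1) − 4a²p(q−p))] / [(n−q)((p+1)(q−p) − 4a²p(q−p−1))] ) and a*(n,p) = (1/2)√((1+1/p)(1+1/(n−p))). -/

import Mathlib

/-!
Write `t = 4a²`. The radicand of `b*(n,p,a,q)` is `(n-q+1)/(n-q) · X(p)/Y(p)` with `X`, `Y`
quadratic in `p`, and the cross difference `X(1)Y(p) - X(p)Y(1)` factors as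
`(p-1)(t-1)(2(p+1) - tp)`. Here `t ≥ 1` because `a > 1/2`, while `a ≤ a*(n,p)` gives
`tp ≤ 2(p+1)` and also keeps both denominators `Y(p)`, `Y(1)` positive.
-/

/-- `a*(n,p)`. -/
noncomputable def astar (n p : ℕ) : ℝ :=
  (1 / 2) * Real.sqrt ((1 + 1 / (p : ℝ)) * (1 + 1 / ((n : ℝ) - p)))

/-- `b*(n,p,a,q)`. -/
noncomputable def bstar (n p : ℕ) (a : ℝ) (q : ℕ) : ℝ :=
  (1 / 2) * Real.sqrt (
    (((n : ℝ) - q + 1) *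
      (((p : ℝ) + 1) * ((q : ℝ) - p + 1) - 4 * a^2 * p * ((q : ℝ) - p))) /
    (((n : ℝ) - q) *
      (((p : ℝ) + 1) * ((q : ℝ) - p) - 4 * a^2 * p * ((q : ℝ) - p - 1))))

noncomputable def bstarNum (t Q P : ℝ) : ℝ := (P + 1) * (Q - P + 1) - t * P * (Q - P)

noncomputable def bstarDen (t Q P : ℝ) : ℝ := (P + 1) * (Q - P) - t * P * (Q - P - 1)

lemma bstar_eq (n p : ℕ) (a : ℝ) (q : ℕ) :
    bstar n p a q = 1 / 2 * Real.sqrt (((n : ℝ) - q + 1) / ((n : ℝ) - q) *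
      (bstarNum (4 * a ^ 2) q p / bstarDen (4 * a ^ 2) q p)) := by
  rw [bstar, mul_div_mul_comm, bstarNum, bstarDen]

lemma four_mul_sq_mul_le_of_le_astar {n p : ℕ} {a : ℝ} (hp : 0 < p) (hpn : p < n)
    (ha : 0 ≤ a) (ha' : a ≤ astar n p) :
    4 * a ^ 2 * ((p : ℝ) * ((n : ℝ) - p)) ≤ ((p : ℝ) + 1) * ((n : ℝ) - p + 1) := by
  have hp' : (0 : ℝ) < p := by exact_mod_cast hp
  have hnp : (0 : ℝ) < (n : ℝ) - p := sub_pos.2 (by exact_mod_cast hpn)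
  have hsq : 4 * a ^ 2 ≤ (1 + 1 / (p : ℝ)) * (1 + 1 / ((n : ℝ) - p)) := by
    have := pow_le_pow_left₀ ha ha' 2
    rw [astar, mul_pow, Real.sq_sqrt (by positivity)] at this
    linarith
  calc 4 * a ^ 2 * ((p : ℝ) * ((n : ℝ) - p))
      ≤ (1 + 1 / (p : ℝ)) * (1 + 1 / ((n : ℝ) - p)) * ((p : ℝ) * ((n : ℝ) - p)) := by
        gcongr
    _ = ((p : ℝ) + 1) * ((n : ℝ) - p + 1) := by field_simp

lemma bstarNum_one_mul_sub (t Q P : ℝ) :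
    bstarNum t Q 1 * bstarDen t Q P - bstarNum t Q P * bstarDen t Q 1 =
      (P - 1) * (t - 1) * (2 * (P + 1) - t * P) := by
  unfold bstarNum bstarDen
  ring

section

variable {t P Q N : ℝ}

lemma bstarDen_pos (hP : 0 ≤ P) (hPQ : P + 1 ≤ Q) (hQN : Q + 1 ≤ N)
    (ht : t * (P * (N - P)) ≤ (P + 1) * (N - P + 1)) :
    0 < bstarDen t Q P := by
  have key : bstarDen t Q P * (N - P) =
      (P + 1) * (N - Q + 1) + (Q - P - 1) * ((P + 1) * (N - P + 1) - t * (P * (N - P))) := by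
    unfold bstarDen
    ring
  have hpos : 0 < bstarDen t Q P * (N - P) := by
    rw [key]
    exact add_pos_of_pos_of_nonneg (mul_pos (by linarith) (by linarith))
      (mul_nonneg (by linarith) (sub_nonneg.2 ht))
  exact pos_of_mul_pos_left hpos (by linarith)

lemma bstarDen_one_pos (hP : 2 ≤ P) (hPQ : P + 1 ≤ Q) (hQN : Q + 1 ≤ N)
    (ht : t * (P * (N - P)) ≤ (P + 1) * (N - P + 1)) :
    0 < bstarDen t Q 1 := by
  have hx : 0 ≤ P - 2 := by linarith
  have hy : 0 ≤ Q - P - 1 := by linarith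
  have hz : 0 ≤ N - Q - 1 := by linarith
  -- in `x = P - 2`, `y = Q - P - 1`, `z = N - Q - 1` the difference is a polynomial with
  -- positive coefficients
  have hbound : (P + 1) * (N - P + 1) * (Q - 2) < 2 * (Q - 1) * (P * (N - P)) := by
    nlinarith [mul_nonneg hy hz, mul_nonneg hy hy, mul_nonneg hx hz, mul_nonneg hx hy,
      mul_nonneg (mul_nonneg hx hy) hz, mul_nonneg hx (mul_nonneg hy hy),
      mul_nonneg hx hx, mul_nonneg (mul_nonneg hx hx) hz, mul_nonneg (mul_nonneg hx hx) hy]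
  have hpos : 0 < bstarDen t Q 1 * (P * (N - P)) := by
    have := mul_le_mul_of_nonneg_right ht (by linarith : (0 : ℝ) ≤ Q - 2)
    unfold bstarDen
    nlinarith
  exact pos_of_mul_pos_left hpos (mul_pos (by linarith) (by linarith)).le

lemma bstarNum_div_bstarDen_le (hP : 2 ≤ P) (hPQ : P + 1 ≤ Q) (hQN : Q + 1 ≤ N)
    (ht : 1 ≤ t) (htb : t * (P * (N - P)) ≤ (P + 1) * (N - P + 1)) :
    bstarNum t Q P / bstarDen t Q P ≤ bstarNum t Q 1 / bstarDen t Q 1 := by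
  have htP : t * P ≤ 2 * (P + 1) := by
    have hNP : 0 < N - P := by linarith
    refine le_of_mul_le_mul_right ?_ hNP
    nlinarith
  rw [div_le_div_iff₀ (bstarDen_pos (by linarith) hPQ hQN htb)
    (bstarDen_one_pos hP hPQ hQN htb), ← sub_nonneg, bstarNum_one_mul_sub]
  exact mul_nonneg (mul_nonneg (by linarith) (by linarith)) (by linarith)

end

theorem bstar_p_one_ge_general
    (n p q : ℕ) (a : ℝ) (hp : 1 < p) (hpq : p < q) (hq : q < n)
    (ha : 1/2 < a) (ha' : a ≤ astar n p) :
    bstar n p a q ≤ bstar n 1 a q := by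
  have hP : (2 : ℝ) ≤ p := by exact_mod_cast hp
  have hPQ : (p : ℝ) + 1 ≤ q := by exact_mod_cast hpq
  have hQN : (q : ℝ) + 1 ≤ n := by exact_mod_cast hq
  have ht : 1 ≤ 4 * a ^ 2 := by nlinarith
  have htb := four_mul_sq_mul_le_of_le_astar (by omega) (by omega) (by linarith) ha'
  rw [bstar_eq, bstar_eq, Nat.cast_one]
  have hfactor : (0 : ℝ) ≤ ((n : ℝ) - q + 1) / ((n : ℝ) - q) :=
    div_nonneg (by linarith) (by linarith)
  gcongr 1 / 2 * Real.sqrt (_ * ?_)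
  exact bstarNum_div_bstarDen_le hP hPQ hQN ht htb

/-- Placing the increased entry `a` at position `p = 1` maximizes the allowable `b`:
`b*(n,1,a,q) ≥ b*(n,p,a,q)`. -/
theorem bstar_p_one_ge
    (n p q : ℕ) (a : ℝ) (hn : 4 ≤ n) (hp : 1 < p) (hpq : p < q) (hq : q < n)
    (ha : 1/2 < a) (ha' : a ≤ astar n p) :
    bstar n p a q ≤ bstar n 1 a q :=
  bstar_p_one_ge_general n p q a hp hpq hq ha ha'
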